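/- arXiv:2603.17041 — 2 statements merged into one kernel-verified Lean document; each statement's English description precedes it below -/
import Mathlib

section
/- (Weyl eigenvalue perturbation.) Let A and B be symmetric n × n real matrices, and let λ₁(M) ≥ λ₂(M) ≥ ⋯ ≥ λ_n(M) denote the eigenvalues of a symmetric matrix M listed in non-increasing order with multiplicity. Then for every k ∈ {1, …, n}, |λ_k(A) − λ_k(B)| ≤ ‖A − B‖₂, where ‖·‖₂ is the ℓ²→ℓ² operator norm. -/
/-
Courant–Fischer by dimension counting. Sort the eigenvalues of `T₁` and `T₂` decreasingly. The span
of the first `k + 1` eigenvectors of `T₁` and the span of the last `n - k` eigenvectors of `T₂` have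
dimensions adding up to `n + 1`, so they contain a common `x ≠ 0`. Expanding in the eigenbases,
`μ₁ k ‖x‖² ≤ ⟪x, T₁ x⟫` and `⟪x, T₂ x⟫ ≤ μ₂ k ‖x‖²`, hence
`(μ₁ k - μ₂ k) ‖x‖² ≤ ⟪x, (T₁ - T₂) x⟫ ≤ ‖T₁ - T₂‖ ‖x‖²`; exchanging `T₁` and `T₂` gives the other
sign.
-/

/-- The ℓ²→ℓ² operator norm of a real matrix, i.e. the norm of the matrix regarded as a
linear map between Euclidean spaces. -/
noncomputable def opNorm {m n : ℕ} (M : Matrix (Fin m) (Fin n) ℝ) : ℝ :=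
  ‖LinearMap.toContinuousLinearMap (Matrix.toEuclideanLin M)‖

open Submodule Module
open scoped InnerProductSpace

theorem Submodule.inf_ne_bot_of_finrank_lt_add {K V : Type*} [DivisionRing K] [AddCommGroup V]
    [Module K V] [FiniteDimensional K V] {s t : Submodule K V}
    (h : finrank K V < finrank K s + finrank K t) : s ⊓ t ≠ ⊥ := fun hst =>
  (finrank_add_finrank_le_of_disjoint (disjoint_iff.mpr hst)).not_gt h

namespace OrthonormalBasis

section

variable {ι 𝕜 E : Type*} [Fintype ι] [RCLike 𝕜] [NormedAddCommGroup E] [InnerProductSpace 𝕜 E]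

theorem inner_eq_zero_of_mem_span_image (b : OrthonormalBasis ι 𝕜 E) {S : Set ι} {x : E}
    (hx : x ∈ span 𝕜 (b '' S)) {i : ι} (hi : i ∉ S) : ⟪x, b i⟫_𝕜 = 0 := by
  obtain ⟨l, hl, rfl⟩ := Finsupp.mem_span_image_iff_linearCombination 𝕜 |>.mp hx
  exact b.orthonormal.inner_finsupp_eq_zero hi hl

theorem finrank_span_image (b : OrthonormalBasis ι 𝕜 E) (S : Finset ι) :
    finrank 𝕜 (span 𝕜 (b '' S)) = S.card := by
  classical
  rw [← Finset.coe_image, finrank_span_finset_eq_card,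
    Finset.card_image_of_injective _ b.orthonormal.linearIndependent.injective]
  simpa using (b.orthonormal.linearIndependent.linearIndepOn (S : Set ι)).id_image

end

section Real

variable {ι E : Type*} [Fintype ι] [NormedAddCommGroup E] [InnerProductSpace ℝ E]
  (b : OrthonormalBasis ι ℝ E) {T : E →ₗ[ℝ] E} {μ : ι → ℝ}

theorem inner_map_eq_mul_inner (hT : ∀ i, T (b i) = μ i • b i) (i : ι) (x : E) :
    ⟪b i, T x⟫_ℝ = μ i * ⟪b i, x⟫_ℝ := by
  conv_lhs => rw [← b.sum_repr' x]
  simp only [map_sum, map_smul, hT, smul_smul]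
  rw [b.orthonormal.inner_right_fintype, mul_comm]

theorem inner_map_self_eq_sum_mul_sq (hT : ∀ i, T (b i) = μ i • b i) (x : E) :
    ⟪x, T x⟫_ℝ = ∑ i, μ i * ⟪b i, x⟫_ℝ ^ 2 := by
  rw [← b.sum_inner_mul_inner]
  refine Finset.sum_congr rfl fun i _ => ?_
  rw [b.inner_map_eq_mul_inner hT, real_inner_comm]
  ring

variable {S : Set ι} {c : ℝ} {x : E}

theorem mul_norm_sq_le_inner_map_self (hT : ∀ i, T (b i) = μ i • b i)
    (hc : ∀ i ∈ S, c ≤ μ i) (hx : x ∈ span ℝ (b '' S)) : c * ‖x‖ ^ 2 ≤ ⟪x, T x⟫_ℝ := by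
  rw [b.inner_map_self_eq_sum_mul_sq hT, ← b.sum_sq_inner_right, Finset.mul_sum]
  refine Finset.sum_le_sum fun i _ => ?_
  by_cases hi : i ∈ S
  · exact mul_le_mul_of_nonneg_right (hc i hi) (sq_nonneg _)
  · simp [real_inner_comm, b.inner_eq_zero_of_mem_span_image hx hi]

theorem inner_map_self_le_mul_norm_sq (hT : ∀ i, T (b i) = μ i • b i)
    (hc : ∀ i ∈ S, μ i ≤ c) (hx : x ∈ span ℝ (b '' S)) : ⟪x, T x⟫_ℝ ≤ c * ‖x‖ ^ 2 := by
  have := b.mul_norm_sq_le_inner_map_self (T := -T) (μ := -μ) (c := -c)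
    (fun i => by simp [hT]) (fun i hi => neg_le_neg (hc i hi)) hx
  simp only [LinearMap.neg_apply, inner_neg_right, neg_mul] at this
  linarith

end Real

end OrthonormalBasis

theorem ContinuousLinearMap.inner_map_self_le_opNorm_mul {E : Type*} [NormedAddCommGroup E]
    [InnerProductSpace ℝ E] (T : E →L[ℝ] E) (x : E) : ⟪x, T x⟫_ℝ ≤ ‖T‖ * ‖x‖ ^ 2 :=
  calc ⟪x, T x⟫_ℝ ≤ ‖x‖ * ‖T x‖ := real_inner_le_norm _ _
    _ ≤ ‖x‖ * (‖T‖ * ‖x‖) := by gcongr; exact T.le_opNorm x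
    _ = ‖T‖ * ‖x‖ ^ 2 := by ring

section Weyl

variable {E : Type*} [NormedAddCommGroup E] [InnerProductSpace ℝ E] {n : ℕ}
  {T₁ T₂ : E →L[ℝ] E} {b₁ b₂ : OrthonormalBasis (Fin n) ℝ E} {μ₁ μ₂ : Fin n → ℝ}

theorem eigenvalue_sub_le_opNorm_sub (hT₁ : ∀ i, T₁ (b₁ i) = μ₁ i • b₁ i)
    (hT₂ : ∀ i, T₂ (b₂ i) = μ₂ i • b₂ i) (hμ₁ : Antitone μ₁) (hμ₂ : Antitone μ₂) (k : Fin n) :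
    μ₁ k - μ₂ k ≤ ‖T₁ - T₂‖ := by
  have := b₁.toBasis.finiteDimensional_of_finite
  have hdim : finrank ℝ E < finrank ℝ (span ℝ (b₁ '' ↑(Finset.Iic k)))
      + finrank ℝ (span ℝ (b₂ '' ↑(Finset.Ici k))) := by
    rw [b₁.finrank_span_image, b₂.finrank_span_image, Fin.card_Iic, Fin.card_Ici,
      finrank_eq_card_basis b₁.toBasis, Fintype.card_fin]
    omega
  obtain ⟨x, hx, hx0⟩ := (Submodule.ne_bot_iff _).mp (Submodule.inf_ne_bot_of_finrank_lt_add hdim)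
  have h₁ : μ₁ k * ‖x‖ ^ 2 ≤ ⟪x, T₁ x⟫_ℝ :=
    b₁.mul_norm_sq_le_inner_map_self (T := T₁.toLinearMap) hT₁
      (fun i hi => hμ₁ (Finset.mem_Iic.mp hi)) hx.1
  have h₂ : ⟪x, T₂ x⟫_ℝ ≤ μ₂ k * ‖x‖ ^ 2 :=
    b₂.inner_map_self_le_mul_norm_sq (T := T₂.toLinearMap) hT₂
      (fun i hi => hμ₂ (Finset.mem_Ici.mp hi)) hx.2
  have h₁₂ := (T₁ - T₂).inner_map_self_le_opNorm_mul x
  rw [sub_apply, inner_sub_right] at h₁₂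
  have hx2 : 0 < ‖x‖ ^ 2 := by positivity
  exact le_of_mul_le_mul_right (by linarith) hx2

theorem abs_eigenvalue_sub_le_opNorm_sub (hT₁ : ∀ i, T₁ (b₁ i) = μ₁ i • b₁ i)
    (hT₂ : ∀ i, T₂ (b₂ i) = μ₂ i • b₂ i) (hμ₁ : Antitone μ₁) (hμ₂ : Antitone μ₂) (k : Fin n) :
    |μ₁ k - μ₂ k| ≤ ‖T₁ - T₂‖ :=
  abs_sub_le_iff.mpr ⟨eigenvalue_sub_le_opNorm_sub hT₁ hT₂ hμ₁ hμ₂ k,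
    norm_sub_rev T₁ T₂ ▸ eigenvalue_sub_le_opNorm_sub hT₂ hT₁ hμ₂ hμ₁ k⟩

end Weyl

theorem Matrix.IsHermitian.toEuclideanLin_eigenvectorBasis {𝕜 ι : Type*} [RCLike 𝕜] [Fintype ι]
    [DecidableEq ι] {A : Matrix ι ι 𝕜} (hA : A.IsHermitian) (i : ι) :
    A.toEuclideanLin (hA.eigenvectorBasis i) = hA.eigenvalues i • hA.eigenvectorBasis i := by
  ext j
  simpa [Matrix.toLpLin_apply] using congrFun (hA.mulVec_eigenvectorBasis i) j

theorem weyl_eigenvalue_perturbation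
    (n : ℕ) (A B : Matrix (Fin n) (Fin n) ℝ)
    (hA : A.IsHermitian) (hB : B.IsHermitian)
    (μA μB : Fin n → ℝ) (σA σB : Equiv.Perm (Fin n))
    (hμA : μA = hA.eigenvalues ∘ σA) (hμB : μB = hB.eigenvalues ∘ σB)
    (hA' : Antitone μA) (hB' : Antitone μB) :
    ∀ k : Fin n, |μA k - μB k| ≤ opNorm (A - B) := by
  intro k
  subst hμA hμB
  rw [opNorm, map_sub, map_sub]
  exact abs_eigenvalue_sub_le_opNorm_sub (b₁ := hA.eigenvectorBasis.reindex σA.symm)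
    (b₂ := hB.eigenvectorBasis.reindex σB.symm)
    (fun i => by simp [hA.toEuclideanLin_eigenvectorBasis])
    (fun i => by simp [hB.toEuclideanLin_eigenvectorBasis]) hA' hB' k
end

section
/- (Davis–Kahan, rank-one form.) Let A and B be symmetric d × d real matrices with d ≥ 2, let λ₁(A) ≥ λ₂(A) ≥ ⋯ denote the eigenvalues of A in non-increasing order, and suppose the eigengap γ = λ₁(A) − λ₂(A) is strictly positive and ‖A − B‖_F < γ. Let u and v be unit vectors in ℝ^d satisfying A u = λ₁(A) u and B v = λ₁(B) v, where λ₁(B) is the largest eigenvalue of B. Then the sine of the principal angle between the spans of u and v satisfies √(1 − ⟨u, v⟩²) ≤ 2‖A − B‖_F / γ. -/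
/-!
Write `c = ⟪u, v⟫` and `w = v - c u`, so that `w ⊥ u` and `‖w‖ = √(1 - c²)`. Since `u` spans the
top eigenspace of `A`, the Rayleigh quotient of `A` at `w` is at most `λ₂(A)`. On the other hand
`⟪w, A w⟫ = ⟪w, A v⟫ = λ₁(B) ‖w‖² + ⟪w, (A - B) v⟫`, and `λ₁(B) ≥ ⟪u, B u⟫ ≥ λ₁(A) - ‖A - B‖`.
Comparing gives `γ ‖w‖² ≤ ‖A - B‖ (‖w‖² + ‖w‖) ≤ 2 ‖A - B‖ ‖w‖`, and the Frobenius norm bounds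
the operator norm.
-/

/-- Frobenius norm of a real matrix. -/
noncomputable def frobNorm {m n : ℕ} (A : Matrix (Fin m) (Fin n) ℝ) : ℝ :=
  Real.sqrt (∑ i, ∑ j, (A i j) ^ 2)

open scoped InnerProductSpace
open Matrix WithLp

namespace OrthonormalBasis

variable {ι E : Type*} [Fintype ι] [NormedAddCommGroup E] [InnerProductSpace ℝ E]
  {T : E →ₗ[ℝ] E} {μ : ι → ℝ}

lemma inner_map_of_apply_eq_smul (b : OrthonormalBasis ι ℝ E) (hT : ∀ j, T (b j) = μ j • b j)
    (j : ι) (x : E) : ⟪b j, T x⟫_ℝ = μ j * ⟪b j, x⟫_ℝ := by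
  classical
  conv_lhs => rw [← b.sum_repr' x]
  simp [hT, inner_sum, inner_smul_right, b.inner_eq_ite, mul_comm]

lemma inner_map_self_eq_sum (b : OrthonormalBasis ι ℝ E) (hT : ∀ j, T (b j) = μ j • b j)
    (x : E) : ⟪x, T x⟫_ℝ = ∑ j, μ j * ⟪b j, x⟫_ℝ ^ 2 := by
  rw [← b.sum_inner_mul_inner]
  refine Finset.sum_congr rfl fun j _ => ?_
  rw [b.inner_map_of_apply_eq_smul hT, real_inner_comm]
  ring

lemma inner_map_self_le (b : OrthonormalBasis ι ℝ E) (hT : ∀ j, T (b j) = μ j • b j)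
    {c : ℝ} {x : E} (hx : ∀ j, c < μ j → ⟪b j, x⟫_ℝ = 0) : ⟪x, T x⟫_ℝ ≤ c * ‖x‖ ^ 2 := by
  rw [b.inner_map_self_eq_sum hT, ← b.sum_sq_norm_inner_right, Finset.mul_sum]
  refine Finset.sum_le_sum fun j _ => ?_
  rw [Real.norm_eq_abs, sq_abs]
  rcases le_or_gt (μ j) c with hj | hj
  · exact mul_le_mul_of_nonneg_right hj (sq_nonneg _)
  · simp [hx j hj]

lemma inner_eq_zero_of_apply_eq_smul (b : OrthonormalBasis ι ℝ E)
    (hT : ∀ j, T (b j) = μ j • b j) {a : ℝ} {x : E} (hx : T x = a • x) {j : ι} (hj : μ j ≠ a) :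
    ⟪b j, x⟫_ℝ = 0 := by
  have h : μ j * ⟪b j, x⟫_ℝ = a * ⟪b j, x⟫_ℝ := by
    rw [← b.inner_map_of_apply_eq_smul hT, hx, real_inner_smul_right]
  exact (mul_eq_mul_right_iff.1 h).resolve_left hj

lemma eq_smul_of_apply_eq_smul (b : OrthonormalBasis ι ℝ E)
    (hT : ∀ j, T (b j) = μ j • b j) {k : ι} (hk : ∀ j ≠ k, μ j ≠ μ k) {x : E}
    (hx : T x = μ k • x) : x = ⟪b k, x⟫_ℝ • b k := by
  conv_lhs => rw [← b.sum_repr' x]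
  refine Finset.sum_eq_single k (fun j _ hj => ?_) (by simp)
  rw [b.inner_eq_zero_of_apply_eq_smul hT hx (hk j hj), zero_smul]

lemma inner_map_self_le_of_inner_eq_zero (b : OrthonormalBasis ι ℝ E)
    (hT : ∀ j, T (b j) = μ j • b j) {k : ι} {c : ℝ} (hc : c < μ k) (hk : ∀ j ≠ k, μ j ≤ c)
    {x : E} (hx : T x = μ k • x) (hx0 : x ≠ 0) {w : E} (hw : ⟪x, w⟫_ℝ = 0) :
    ⟪w, T w⟫_ℝ ≤ c * ‖w‖ ^ 2 := by
  have hxk : x = ⟪b k, x⟫_ℝ • b k :=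
    b.eq_smul_of_apply_eq_smul hT (fun j hj => ((hk j hj).trans_lt hc).ne) hx
  have hbkx : ⟪b k, x⟫_ℝ ≠ 0 := fun h => hx0 (by rw [hxk, h, zero_smul])
  have hbkw : ⟪b k, w⟫_ℝ = 0 := by
    rw [hxk, real_inner_smul_left] at hw
    exact (mul_eq_zero.1 hw).resolve_left hbkx
  refine b.inner_map_self_le hT fun j hj => ?_
  obtain rfl : j = k := by_contra fun hjk => (hk j hjk).not_gt hj
  exact hbkw

end OrthonormalBasis

section DavisKahan

variable {E : Type*} [NormedAddCommGroup E] [InnerProductSpace ℝ E]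

lemma norm_sub_inner_smul_sq {u : E} (hu : ‖u‖ = 1) (v : E) :
    ‖v - ⟪u, v⟫_ℝ • u‖ ^ 2 = ‖v‖ ^ 2 - ⟪u, v⟫_ℝ ^ 2 := by
  rw [norm_sub_sq_real, norm_smul, real_inner_smul_right, Real.norm_eq_abs, mul_pow, sq_abs, hu,
    real_inner_comm]
  ring

lemma eigengap_mul_norm_sq_le {T S : E →ₗ[ℝ] E} {u v : E} {lamT lamS γ ε : ℝ}
    (hu : ‖u‖ = 1) (hv : ‖v‖ = 1) (hTu : T u = lamT • u) (hSv : S v = lamS • v)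
    (hgap : ∀ w, ⟪u, w⟫_ℝ = 0 → ⟪w, T w⟫_ℝ ≤ (lamT - γ) * ‖w‖ ^ 2)
    (hSu : ⟪u, S u⟫_ℝ ≤ lamS) (hTS : ∀ x, ‖(T - S) x‖ ≤ ε * ‖x‖) :
    γ * ‖v - ⟪u, v⟫_ℝ • u‖ ^ 2 ≤ ε * ‖v - ⟪u, v⟫_ℝ • u‖ ^ 2 + ε * ‖v - ⟪u, v⟫_ℝ • u‖ := by
  set w := v - ⟪u, v⟫_ℝ • u with hw
  have huw : ⟪u, w⟫_ℝ = 0 := by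
    rw [hw, inner_sub_right, real_inner_smul_right, real_inner_self_eq_norm_sq, hu]; ring
  have hwv : ⟪w, v⟫_ℝ = ‖w‖ ^ 2 := by
    rw [norm_sub_inner_smul_sq hu, hv, hw, inner_sub_left, real_inner_smul_left,
      real_inner_self_eq_norm_sq, hv]; ring
  have hpert : ∀ x y, |⟪x, (T - S) y⟫_ℝ| ≤ ε * ‖x‖ * ‖y‖ := fun x y =>
    (abs_real_inner_le_norm _ _).trans <| by
      rw [mul_assoc, mul_left_comm]; exact mul_le_mul_of_nonneg_left (hTS y) (norm_nonneg x)
  have hlamS : lamT - ε ≤ lamS := by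
    have h := abs_le.1 (hpert u u)
    rw [LinearMap.sub_apply, inner_sub_right, hTu, real_inner_smul_right,
      real_inner_self_eq_norm_sq, hu] at h
    simp only [one_pow, mul_one] at h
    linarith [h.2]
  -- `⟪w, T w⟫ = ⟪w, T v⟫` because `w ⊥ u` and `T u ∥ u`.
  have hTw : ⟪w, T w⟫_ℝ = lamS * ‖w‖ ^ 2 + ⟪w, (T - S) v⟫_ℝ := by
    rw [LinearMap.sub_apply, inner_sub_right, hSv, real_inner_smul_right, hwv]
    nth_rw 2 [hw]
    rw [map_sub, map_smul, hTu, inner_sub_right, real_inner_smul_right, real_inner_smul_right,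
      real_inner_comm u w, huw]
    ring
  have hwTS := (abs_le.1 (hpert w v)).1
  rw [hv, mul_one] at hwTS
  have hlamS_w := mul_le_mul_of_nonneg_right hlamS (sq_nonneg ‖w‖)
  linarith [hgap w huw]

theorem sqrt_one_sub_inner_sq_le_of_eigengap {T S : E →ₗ[ℝ] E} {u v : E} {lamT lamS γ ε : ℝ}
    (hu : ‖u‖ = 1) (hv : ‖v‖ = 1) (hTu : T u = lamT • u) (hSv : S v = lamS • v)
    (hgap : ∀ w, ⟪u, w⟫_ℝ = 0 → ⟪w, T w⟫_ℝ ≤ (lamT - γ) * ‖w‖ ^ 2)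
    (hSu : ⟪u, S u⟫_ℝ ≤ lamS) (hTS : ∀ x, ‖(T - S) x‖ ≤ ε * ‖x‖) (hγ : 0 < γ) :
    √(1 - ⟪u, v⟫_ℝ ^ 2) ≤ 2 * ε / γ := by
  set s := ‖v - ⟪u, v⟫_ℝ • u‖
  have hs : √(1 - ⟪u, v⟫_ℝ ^ 2) = s := by
    rw [← one_pow 2, ← hv, ← norm_sub_inner_smul_sq hu, Real.sqrt_sq (norm_nonneg _)]
  have hs0 : 0 ≤ s := norm_nonneg _
  have hs1 : s ≤ 1 := (sq_le_one_iff₀ hs0).1 <| by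
    rw [norm_sub_inner_smul_sq hu, hv]; linarith [sq_nonneg ⟪u, v⟫_ℝ]
  have hε : 0 ≤ ε := by simpa [hu] using (norm_nonneg _).trans (hTS u)
  have hkey : γ * s ^ 2 ≤ ε * s ^ 2 + ε * s := eigengap_mul_norm_sq_le hu hv hTu hSv hgap hSu hTS
  have hkey' : γ * s * s ≤ 2 * ε * s := by
    nlinarith [mul_le_mul_of_nonneg_left hs1 (mul_nonneg hε hs0)]
  rw [hs, le_div_iff₀ hγ]
  rcases hs0.eq_or_lt with h0 | hpos
  · rw [← h0]; linarith
  · linarith [le_of_mul_le_mul_right hkey' hpos]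

end DavisKahan

lemma Matrix.IsHermitian.toEuclideanLin_eigenvectorBasis_s10 {n : Type*} [Fintype n] [DecidableEq n]
    {M : Matrix n n ℝ} (hM : M.IsHermitian) (j : n) :
    toEuclideanLin M (hM.eigenvectorBasis j) = hM.eigenvalues j • hM.eigenvectorBasis j := by
  ext1
  simp [hM.mulVec_eigenvectorBasis j]

lemma Matrix.IsHermitian.eigenvalues_le {n : Type*} [Fintype n] [DecidableEq n]
    {M : Matrix n n ℝ} (hM : M.IsHermitian) {c : ℝ}
    (hc : c ∈ upperBounds {t | ∃ w : n → ℝ, w ≠ 0 ∧ M *ᵥ w = t • w}) (j : n) :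
    hM.eigenvalues j ≤ c :=
  hc ⟨_, fun h => hM.eigenvectorBasis.orthonormal.ne_zero j (congrArg (toLp 2) h),
    hM.mulVec_eigenvectorBasis j⟩

lemma EuclideanSpace.norm_toLp_eq_sqrt {n : Type*} [Fintype n] (x : n → ℝ) :
    ‖toLp 2 x‖ = √(∑ i, x i ^ 2) := by
  simp [EuclideanSpace.norm_eq]

lemma norm_toEuclideanLin_le_frobNorm {m n : ℕ} (M : Matrix (Fin m) (Fin n) ℝ)
    (x : EuclideanSpace ℝ (Fin n)) : ‖toEuclideanLin M x‖ ≤ frobNorm M * ‖x‖ := by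
  rw [toLpLin_apply, EuclideanSpace.norm_toLp_eq_sqrt, EuclideanSpace.norm_eq, frobNorm,
    ← Real.sqrt_mul (by positivity), Finset.sum_mul]
  refine Real.sqrt_le_sqrt (Finset.sum_le_sum fun i _ => ?_)
  simp only [Real.norm_eq_abs, sq_abs]
  exact Finset.sum_mul_sq_le_sq_mul_sq Finset.univ (M i) x.ofLp

lemma Antitone.apply_le_of_val_ne_zero {d : ℕ} {μ : Fin d → ℝ} (hμ : Antitone μ) {i i1 : Fin d}
    (hi : (i : ℕ) ≠ 0) (hi1 : (i1 : ℕ) = 1) : μ i ≤ μ i1 :=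
  hμ (Fin.le_def.2 (by omega))

theorem davis_kahan_rank_one_general
    (d : ℕ) (A B : Matrix (Fin d) (Fin d) ℝ)
    (hA : A.IsHermitian) (hB : B.IsHermitian)
    -- `μA` lists the eigenvalues of `A` (with multiplicity) in non-increasing order
    (μA : Fin d → ℝ) (σA : Equiv.Perm (Fin d))
    (hμA : μA = hA.eigenvalues ∘ σA) (hmono : Antitone μA)
    (i0 i1 : Fin d) (hi0 : (i0 : ℕ) = 0) (hi1 : (i1 : ℕ) = 1)
    (γ : ℝ) (hγ : γ = μA i0 - μA i1) (hγpos : 0 < γ)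
    (u v : Fin d → ℝ)
    (hu : Real.sqrt (∑ i, u i ^ 2) = 1) (hv : Real.sqrt (∑ i, v i ^ 2) = 1)
    (hAu : A.mulVec u = μA i0 • u)
    -- `lamB` is the largest eigenvalue of `B`
    (lamB : ℝ)
    (hlamB : IsGreatest {t : ℝ | ∃ w : Fin d → ℝ, w ≠ 0 ∧ B.mulVec w = t • w} lamB)
    (hBv : B.mulVec v = lamB • v) :
    Real.sqrt (1 - (∑ i, u i * v i) ^ 2) ≤ 2 * frobNorm (A - B) / γ := by
  have hAeig : ∀ j, hA.eigenvalues j = μA (σA.symm j) := fun j => by simp [hμA]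
  have hsecond : ∀ j ≠ σA i0, hA.eigenvalues j ≤ μA i0 - γ := fun j hj => by
    rw [hAeig, hγ, sub_sub_cancel]
    refine hmono.apply_le_of_val_ne_zero (fun h => hj ?_) hi1
    rw [← σA.apply_symm_apply j, Fin.ext (h.trans hi0.symm)]
  have hu' : ‖toLp 2 u‖ = 1 := by rw [EuclideanSpace.norm_toLp_eq_sqrt, hu]
  have hv' : ‖toLp 2 v‖ = 1 := by rw [EuclideanSpace.norm_toLp_eq_sqrt, hv]
  have hinner : ⟪toLp 2 u, toLp 2 v⟫_ℝ = ∑ i, u i * v i := by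
    simp [EuclideanSpace.inner_toLp_toLp, dotProduct, mul_comm]
  rw [← hinner]
  refine sqrt_one_sub_inner_sq_le_of_eigengap (T := toEuclideanLin A) (S := toEuclideanLin B) (lamT := μA i0)
    (lamS := lamB) hu' hv' (by ext1; simp [hAu]) (by ext1; simp [hBv]) ?_ ?_
    (fun x => by rw [← map_sub]; exact norm_toEuclideanLin_le_frobNorm _ x) hγpos
  · refine fun w hw => hA.eigenvectorBasis.inner_map_self_le_of_inner_eq_zero
      hA.toEuclideanLin_eigenvectorBasis_s10 (k := σA i0) (by simp [hAeig, hγpos]) hsecond ?_ ?_ hw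
    · ext1; simp [hAu, hAeig]
    · exact fun h => by simp [h] at hu'
  · refine (hB.eigenvectorBasis.inner_map_self_le hB.toEuclideanLin_eigenvectorBasis_s10
      fun j hj => absurd (hB.eigenvalues_le hlamB.2 j) hj.not_ge).trans_eq ?_
    rw [hu', one_pow, mul_one]

theorem davis_kahan_rank_one
    (d : ℕ) (hd : 2 ≤ d) (A B : Matrix (Fin d) (Fin d) ℝ)
    (hA : A.IsHermitian) (hB : B.IsHermitian)
    -- `μA` lists the eigenvalues of `A` (with multiplicity) in non-increasing order
    (μA : Fin d → ℝ) (σA : Equiv.Perm (Fin d))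
    (hμA : μA = hA.eigenvalues ∘ σA) (hmono : Antitone μA)
    (i0 i1 : Fin d) (hi0 : (i0 : ℕ) = 0) (hi1 : (i1 : ℕ) = 1)
    (γ : ℝ) (hγ : γ = μA i0 - μA i1) (hγpos : 0 < γ)
    (hpert : frobNorm (A - B) < γ)
    (u v : Fin d → ℝ)
    (hu : Real.sqrt (∑ i, u i ^ 2) = 1) (hv : Real.sqrt (∑ i, v i ^ 2) = 1)
    (hAu : A.mulVec u = μA i0 • u)
    -- `lamB` is the largest eigenvalue of `B`
    (lamB : ℝ)
    (hlamB : IsGreatest {t : ℝ | ∃ w : Fin d → ℝ, w ≠ 0 ∧ B.mulVec w = t • w} lamB)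
    (hBv : B.mulVec v = lamB • v) :
    Real.sqrt (1 - (∑ i, u i * v i) ^ 2) ≤ 2 * frobNorm (A - B) / γ :=
  davis_kahan_rank_one_general d A B hA hB μA σA hμA hmono i0 i1 hi0 hi1 γ hγ hγpos u v hu hv hAu
    lamB hlamB hBv
end
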